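/- Nuclearity passes to retracts: if (C1, C2) is a nuclear pair (C1 ⊙ C2 = C1 ⊛ C2), and C1' is a retract of C1 and C2' is a retract of C2, then (C1', C2') is a nuclear pair. -/

import Mathlib

open scoped TensorProduct
open TensorProduct

section Defs

variable {V V' V1 V2 : Type*}
  [AddCommGroup V] [Module ℝ V] [AddCommGroup V'] [Module ℝ V']
  [AddCommGroup V1] [Module ℝ V1] [AddCommGroup V2] [Module ℝ V2]

/-- The dual cone of a set `C`: linear functionals nonnegative on `C`. -/
def dualCone (C : Set V) : Set (Module.Dual ℝ V) := {f | ∀ x ∈ C, 0 ≤ f x}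

/-- The functional `f ⊗ g` on `V1 ⊗ V2`. -/
noncomputable def pairTensor (f : Module.Dual ℝ V1) (g : Module.Dual ℝ V2) :
    Module.Dual ℝ (V1 ⊗[ℝ] V2) :=
  (TensorProduct.lid ℝ ℝ).toLinearMap ∘ₗ TensorProduct.map f g

/-- The minimal tensor product of two cones: the convex hull of the product tensors. -/
def minTensor (C1 : Set V1) (C2 : Set V2) : Set (V1 ⊗[ℝ] V2) :=
  convexHull ℝ {z | ∃ x ∈ C1, ∃ y ∈ C2, z = x ⊗ₜ[ℝ] y}

/-- The maximal tensor product of two cones: tensors nonnegative on product functionals. -/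
def maxTensor (C1 : Set V1) (C2 : Set V2) : Set (V1 ⊗[ℝ] V2) :=
  {z | ∀ f ∈ dualCone C1, ∀ g ∈ dualCone C2, 0 ≤ pairTensor f g z}

/-- A cone: a set closed under multiplication by nonnegative scalars. -/
def IsConeSet (C : Set V) : Prop := ∀ x ∈ C, ∀ a : ℝ, 0 ≤ a → a • x ∈ C

/-- Topological closedness of a subset of a finite-dimensional real vector space,
expressed through (all) linear identifications with `Fin n → ℝ`. -/
def IsClosedSet (C : Set V) : Prop := ∀ (n : ℕ) (e : V ≃ₗ[ℝ] (Fin n → ℝ)), IsClosed (e '' C)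

/-- A proper cone: convex, closed, salient and generating. -/
def IsProperCone (C : Set V) : Prop :=
  Convex ℝ C ∧ IsClosedSet C ∧ IsConeSet C ∧ C ∩ (-C) = {0} ∧ Submodule.span ℝ C = ⊤

/-- A classical cone: the set of vectors with nonnegative coordinates in some basis,
i.e. the cone generated by a basis of the space. -/
def IsClassicalCone (C : Set V) : Prop :=
  ∃ (ι : Type) (b : Module.Basis ι ℝ V), C = {x | ∀ i, 0 ≤ b.repr x i}

/-- `C'` is a retract of `C` if there are positive maps `Φ, Ψ` with `Φ ∘ Ψ = id`. -/
def IsRetractOf (C' : Set V') (C : Set V) : Prop :=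
  ∃ (Φ : V →ₗ[ℝ] V') (Ψ : V' →ₗ[ℝ] V),
    (∀ x ∈ C, Φ x ∈ C') ∧ (∀ y ∈ C', Ψ y ∈ C) ∧ Φ ∘ₗ Ψ = LinearMap.id

/-- A polyhedral cone: the conical hull of finitely many vectors. -/
def IsPolyhedralCone (C : Set V) : Prop :=
  ∃ (k : ℕ) (v : Fin k → V),
    C = {x | ∃ c : Fin k → ℝ, (∀ i, 0 ≤ c i) ∧ x = ∑ i, c i • v i}

end Defs

section TensorCones

variable {V1 V2 W1 W2 : Type*}
  [AddCommGroup V1] [Module ℝ V1] [AddCommGroup V2] [Module ℝ V2]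
  [AddCommGroup W1] [Module ℝ W1] [AddCommGroup W2] [Module ℝ W2]

lemma pairTensor_tmul (f : Module.Dual ℝ V1) (g : Module.Dual ℝ V2) (x : V1) (y : V2) :
    pairTensor f g (x ⊗ₜ[ℝ] y) = f x * g y := by
  simp [pairTensor]

lemma pairTensor_map_apply (f : Module.Dual ℝ V1) (g : Module.Dual ℝ V2)
    (Ψ1 : W1 →ₗ[ℝ] V1) (Ψ2 : W2 →ₗ[ℝ] V2) (z : W1 ⊗[ℝ] W2) :
    pairTensor f g (map Ψ1 Ψ2 z) = pairTensor (f ∘ₗ Ψ1) (g ∘ₗ Ψ2) z := by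
  simp only [pairTensor, LinearMap.comp_apply, map_comp]

lemma convex_maxTensor (C1 : Set V1) (C2 : Set V2) : Convex ℝ (maxTensor C1 C2) := by
  intro x hx y hy a b ha hb _ f hf g hg
  simp only [map_add, map_smul, smul_eq_mul]
  exact add_nonneg (mul_nonneg ha (hx f hf g hg)) (mul_nonneg hb (hy f hf g hg))

lemma minTensor_subset_maxTensor (C1 : Set V1) (C2 : Set V2) :
    minTensor C1 C2 ⊆ maxTensor C1 C2 := by
  refine convexHull_min ?_ (convex_maxTensor C1 C2)
  rintro _ ⟨x, hx, y, hy, rfl⟩ f hf g hg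
  rw [pairTensor_tmul]
  exact mul_nonneg (hf x hx) (hg y hy)

lemma map_mem_minTensor {C1 : Set V1} {C2 : Set V2} {D1 : Set W1} {D2 : Set W2}
    {Φ1 : V1 →ₗ[ℝ] W1} {Φ2 : V2 →ₗ[ℝ] W2}
    (hΦ1 : ∀ x ∈ C1, Φ1 x ∈ D1) (hΦ2 : ∀ y ∈ C2, Φ2 y ∈ D2)
    {z : V1 ⊗[ℝ] V2} (hz : z ∈ minTensor C1 C2) : map Φ1 Φ2 z ∈ minTensor D1 D2 := by
  refine convexHull_mono ?_ ((map Φ1 Φ2).image_convexHull _ ▸ Set.mem_image_of_mem _ hz)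
  rintro _ ⟨_, ⟨x, hx, y, hy, rfl⟩, rfl⟩
  exact ⟨Φ1 x, hΦ1 x hx, Φ2 y, hΦ2 y hy, map_tmul Φ1 Φ2 x y⟩

lemma map_mem_maxTensor {C1 : Set V1} {C2 : Set V2} {D1 : Set W1} {D2 : Set W2}
    {Ψ1 : W1 →ₗ[ℝ] V1} {Ψ2 : W2 →ₗ[ℝ] V2}
    (hΨ1 : ∀ x ∈ D1, Ψ1 x ∈ C1) (hΨ2 : ∀ y ∈ D2, Ψ2 y ∈ C2)
    {z : W1 ⊗[ℝ] W2} (hz : z ∈ maxTensor D1 D2) : map Ψ1 Ψ2 z ∈ maxTensor C1 C2 := by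
  intro f hf g hg
  rw [pairTensor_map_apply]
  exact hz _ (fun x hx => hf _ (hΨ1 x hx)) _ (fun y hy => hg _ (hΨ2 y hy))

end TensorCones

theorem stmt4_general {V1 V2 W1 W2 : Type*}
    [AddCommGroup V1] [Module ℝ V1]
    [AddCommGroup V2] [Module ℝ V2]
    [AddCommGroup W1] [Module ℝ W1]
    [AddCommGroup W2] [Module ℝ W2]
    (C1 : Set V1) (C2 : Set V2) (C1' : Set W1) (C2' : Set W2)
    (hr1 : IsRetractOf C1' C1) (hr2 : IsRetractOf C2' C2)
    (hnuc : minTensor C1 C2 = maxTensor C1 C2) :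
    minTensor C1' C2' = maxTensor C1' C2' := by
  obtain ⟨Φ1, Ψ1, hΦ1, hΨ1, hid1⟩ := hr1
  obtain ⟨Φ2, Ψ2, hΦ2, hΨ2, hid2⟩ := hr2
  refine (minTensor_subset_maxTensor C1' C2').antisymm fun z hz => ?_
  have hlift : map Ψ1 Ψ2 z ∈ minTensor C1 C2 := hnuc ▸ map_mem_maxTensor hΨ1 hΨ2 hz
  have hretract : map Φ1 Φ2 (map Ψ1 Ψ2 z) = z := by
    rw [← LinearMap.comp_apply, ← map_comp, hid1, hid2, map_id, LinearMap.id_apply]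
  exact hretract ▸ map_mem_minTensor hΦ1 hΦ2 hlift

/-- Nuclearity passes to retracts. -/
theorem stmt4 {V1 V2 W1 W2 : Type*}
    [AddCommGroup V1] [Module ℝ V1] [FiniteDimensional ℝ V1]
    [AddCommGroup V2] [Module ℝ V2] [FiniteDimensional ℝ V2]
    [AddCommGroup W1] [Module ℝ W1] [FiniteDimensional ℝ W1]
    [AddCommGroup W2] [Module ℝ W2] [FiniteDimensional ℝ W2]
    (C1 : Set V1) (C2 : Set V2) (C1' : Set W1) (C2' : Set W2)
    (h1 : IsProperCone C1) (h2 : IsProperCone C2)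
    (h1' : IsProperCone C1') (h2' : IsProperCone C2')
    (hr1 : IsRetractOf C1' C1) (hr2 : IsRetractOf C2' C2)
    (hnuc : minTensor C1 C2 = maxTensor C1 C2) :
    minTensor C1' C2' = maxTensor C1' C2' :=
  stmt4_general C1 C2 C1' C2' hr1 hr2 hnuc
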